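/- Let D be a tournament missing disjoint paths of length 2 and let C = a_1b_1c_1, …, a_kb_kc_k be a double cycle in Δ(D). For every t ∈ {1,…,k} (indices modulo k, so index k+1 means 1), with all neighborhoods taken in the induced subdigraph D[K(C)]: (1) if c_t ∉ N⁻(a_t), then |N⁺⁺(a_t)| = |N⁻(a_t)| when b_{t+1} ∈ N⁻(a_t), and |N⁺⁺(a_t)| = |N⁻(a_t)| − 1 otherwise; (2) if a_t ∉ N⁻(c_t), then |N⁺⁺(c_t)| = |N⁻(c_t)| when b_{t+1} ∈ N⁻(c_t), and |N⁺⁺(c_t)| = |N⁻(c_t)| − 1 otherwise; (3) |N⁺⁺(b_t)| = |N⁻(b_t)| + 1 when b_{t+1} ∈ N⁻(b_t), and |N⁺⁺(b_t)| = |N⁻(b_t)| otherwise. -/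

import Mathlib

/-!
The vertices of a double cycle split into the layers `{aᵢ, bᵢ, cᵢ}`. Every missing edge lies
inside a layer, and the losing conditions fix all arcs between consecutive layers: an arc from
layer `i` to layer `i + 1` joining two ends or two middles points the same way as `bᵢ → bᵢ₊₁`,
one joining an end and a middle points the other way, and a 2-path from layer `i` to layer
`i + 1` is always short-cut by an arc.

Let `v` lie in layer `t`. An in-neighbour `u` of `v` from a layer `j ≠ t, t + 1` lies in
`N⁺⁺(v)` through layer `t + 1`: otherwise `u` beats a middle and an end of layer `t`, and this
propagates down to layer `j + 1`, whose arcs into layer `j` make that impossible. Hence `N⁺⁺(v)`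
consists of the in-neighbours of `v` outside layer `t + 1` together with the missing neighbours
of `v`, and the in-neighbours of `v` in layer `t + 1` are `bₜ₊₁` alone or the two ends,
according as `bₜ₊₁ → v` or not.
-/

namespace SSNC

variable {V : Type*}

/-- The arc relation of an oriented graph: no digons (hence irreflexive). -/
def Oriented (A : V → V → Prop) : Prop := ∀ u v, A u v → ¬ A v u

/-- `u ∈ N⁺⁺(v)`: the second out-neighborhood. -/
def SecondOut (A : V → V → Prop) (v u : V) : Prop :=
  u ≠ v ∧ ¬ A v u ∧ ∃ w, A v w ∧ A w u

/-- `{u, v}` is a missing edge of the digraph. -/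
def IsMissing (A : V → V → Prop) (u v : V) : Prop :=
  u ≠ v ∧ ¬ A u v ∧ ¬ A v u

/-- The losing relation for a fixed labeling of the two pairs: `a→x`, `b→y`,
`y ∉ N⁺(a) ∪ N⁺⁺(a)` and `x ∉ N⁺(b) ∪ N⁺⁺(b)`. -/
def LosesOrd (A : V → V → Prop) (a b x y : V) : Prop :=
  A a x ∧ A b y ∧ ¬ A a y ∧ ¬ SecondOut A a y ∧ ¬ A b x ∧ ¬ SecondOut A b x

/-- The missing edge `{a,b}` loses to the missing edge `{x,y}` (for some labeling). -/
def Loses (A : V → V → Prop) (a b x y : V) : Prop :=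
  LosesOrd A a b x y ∨ LosesOrd A a b y x

/-- Degree of a vertex in the missing graph. -/
noncomputable def mdeg (A : V → V → Prop) (v : V) : ℕ :=
  ({w | IsMissing A v w} : Set V).ncard

/-- The missing graph, as a simple graph. -/
def missingGraph (A : V → V → Prop) : SimpleGraph V where
  Adj u v := IsMissing A u v
  symm := by
    constructor
    rintro u v ⟨h1, h2, h3⟩
    exact ⟨h1.symm, h3, h2⟩
  loopless := by
    constructor
    rintro v ⟨h1, -, -⟩
    exact h1 rfl

/-- The missing graph is a vertex-disjoint union of paths
(equivalently: acyclic with maximum degree at most 2). -/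
def MissingDisjointPaths (A : V → V → Prop) : Prop :=
  (missingGraph A).IsAcyclic ∧ ∀ v, mdeg A v ≤ 2

/-- The missing graph is a vertex-disjoint union of paths on exactly 3 vertices
(equivalently: every missing edge has one endpoint of missing-degree 1 and one of
missing-degree 2). -/
def MissingPaths2 (A : V → V → Prop) : Prop :=
  ∀ u v, IsMissing A u v →
    (mdeg A u = 1 ∧ mdeg A v = 2) ∨ (mdeg A u = 2 ∧ mdeg A v = 1)

/-- The missing graph is a vertex-disjoint union of paths on 2 or 3 vertices. -/
def MissingPathsLe2 (A : V → V → Prop) : Prop :=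
  ∀ u v, IsMissing A u v →
    (mdeg A u = 1 ∧ mdeg A v = 1) ∨ (mdeg A u = 1 ∧ mdeg A v = 2) ∨
    (mdeg A u = 2 ∧ mdeg A v = 1)

/-- Out-degree of the missing edge `{u,v}` in the dependency digraph `Δ(D)`:
the number of missing edges it loses to. -/
noncomputable def outDegDelta (A : V → V → Prop) (u v : V) : ℕ :=
  ({f : Sym2 V | ∃ x y, f = s(x, y) ∧ IsMissing A x y ∧ Loses A u v x y}).ncard

/-- In-degree of the missing edge `{u,v}` in the dependency digraph `Δ(D)`:
the number of missing edges losing to it. -/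
noncomputable def inDegDelta (A : V → V → Prop) (u v : V) : ℕ :=
  ({f : Sym2 V | ∃ x y, f = s(x, y) ∧ IsMissing A x y ∧ Loses A x y u v}).ncard

/-- `C = a₁b₁c₁, …, a_k b_k c_k` is a double cycle in `Δ(D)`: pairwise vertex-disjoint
missing paths of length 2 (`k ≥ 2`), where each of `{aᵢ,bᵢ}, {bᵢ,cᵢ}` loses to each of
`{aᵢ₊₁,bᵢ₊₁}, {bᵢ₊₁,cᵢ₊₁}` (indices modulo `k`). -/
def IsDoubleCycle (A : V → V → Prop) (k : ℕ) (a b c : ZMod k → V) : Prop :=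
  2 ≤ k ∧
  (∀ i, IsMissing A (a i) (b i) ∧ IsMissing A (b i) (c i) ∧ a i ≠ c i) ∧
  (∀ i j, i ≠ j → Disjoint ({a i, b i, c i} : Set V) {a j, b j, c j}) ∧
  (∀ i, Loses A (a i) (b i) (a (i + 1)) (b (i + 1)) ∧
        Loses A (a i) (b i) (b (i + 1)) (c (i + 1)) ∧
        Loses A (b i) (c i) (a (i + 1)) (b (i + 1)) ∧
        Loses A (b i) (c i) (b (i + 1)) (c (i + 1)))

/-- `K(C)` for a double cycle `C`. -/
def Kset {k : ℕ} (a b c : ZMod k → V) : Set V :=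
  {v | ∃ i, v = a i ∨ v = b i ∨ v = c i}

/-- Out-neighborhood in the subdigraph induced on `K`. -/
def outIn (A : V → V → Prop) (K : Set V) (v : V) : Set V := {u | u ∈ K ∧ A v u}

/-- In-neighborhood in the subdigraph induced on `K`. -/
def inIn (A : V → V → Prop) (K : Set V) (v : V) : Set V := {u | u ∈ K ∧ A u v}

/-- Second out-neighborhood in the subdigraph induced on `K`. -/
def secondOutIn (A : V → V → Prop) (K : Set V) (v : V) : Set V :=
  {u | u ∈ K ∧ u ≠ v ∧ ¬ A v u ∧ ∃ w ∈ K, A v w ∧ A w u}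

/-- Second in-neighborhood in the subdigraph induced on `K`. -/
def secondInIn (A : V → V → Prop) (K : Set V) (v : V) : Set V :=
  {u | u ∈ K ∧ u ≠ v ∧ ¬ A u v ∧ ∃ w ∈ K, A u w ∧ A w v}
theorem ZMod.succ_of_descent {k : ℕ} [NeZero k] {D : ZMod k → Prop} {j t : ZMod k}
    (hstep : ∀ m, m ≠ j → D (m + 1) → D m) (ht : D t) : D (j + 1) := by
  suffices h : ∀ n : ℕ, n < k → D (j + 1 + n) → D (j + 1) by
    refine h (t - (j + 1)).val (ZMod.val_lt _) ?_
    rwa [ZMod.natCast_zmod_val, add_sub_cancel]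
  intro n
  induction n with
  | zero => simp
  | succ n ih =>
    intro hn hD
    refine ih (by omega) (hstep _ ?_ ?_)
    · intro heq
      have h0 : ((n + 1 : ℕ) : ZMod k) = 0 := by
        push_cast
        linear_combination heq
      rw [ZMod.natCast_eq_zero_iff] at h0
      exact absurd (Nat.le_of_dvd (by omega) h0) (by omega)
    · simpa [add_assoc] using hD

theorem ZMod.self_ne_add_one {k : ℕ} (hk : 2 ≤ k) (i : ZMod k) : i ≠ i + 1 := by
  have : Fact (1 < k) := ⟨hk⟩
  intro h
  exact one_ne_zero (by linear_combination -h : (1 : ZMod k) = 0)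

variable {A : V → V → Prop}

lemma IsMissing.symm {u v : V} (h : IsMissing A u v) : IsMissing A v u :=
  ⟨h.1.symm, h.2.2, h.2.1⟩

lemma Oriented.irrefl (hA : Oriented A) (v : V) : ¬ A v v :=
  fun h => hA v v h h

lemma not_secondOut_of_arc {u v : V} (h : A u v) : ¬ SecondOut A u v :=
  fun hs => hs.2.1 h

section MissingPaths2

variable [Finite V] {u v w x : V}

lemma two_le_mdeg (hv : IsMissing A u v) (hw : IsMissing A u w) (hvw : v ≠ w) :
    2 ≤ mdeg A u := by
  have hsub : ({v, w} : Set V) ⊆ {y | IsMissing A u y} := by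
    rintro y (rfl | rfl) <;> assumption
  simpa [mdeg, Set.ncard_pair hvw] using Set.ncard_le_ncard hsub (Set.toFinite _)

lemma MissingPaths2.mdeg_eq_two (hP : MissingPaths2 A) (hv : IsMissing A u v)
    (hw : IsMissing A u w) (hvw : v ≠ w) : mdeg A u = 2 ∧ mdeg A v = 1 := by
  have := two_le_mdeg hv hw hvw
  rcases hP u v hv with h | h
  · omega
  · exact h

lemma MissingPaths2.eq_or_eq_of_isMissing (hP : MissingPaths2 A) (hv : IsMissing A u v)
    (hw : IsMissing A u w) (hvw : v ≠ w) (hx : IsMissing A u x) : x = v ∨ x = w := by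
  have hsub : ({v, w} : Set V) ⊆ {y | IsMissing A u y} := by
    rintro y (rfl | rfl) <;> assumption
  have heq := Set.eq_of_subset_of_ncard_le hsub
    (by rw [Set.ncard_pair hvw]; exact (hP.mdeg_eq_two hv hw hvw).1.le) (Set.toFinite _)
  have hx' : x ∈ ({v, w} : Set V) := heq ▸ hx
  simpa using hx'

lemma MissingPaths2.eq_of_isMissing (hP : MissingPaths2 A) (hv : IsMissing A u v)
    (hw : IsMissing A u w) (hvw : v ≠ w) (hx : IsMissing A v x) : x = u := by
  have hsub : ({u} : Set V) ⊆ {y | IsMissing A v y} := by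
    rintro y rfl
    exact hv.symm
  have heq := Set.eq_of_subset_of_ncard_le hsub
    (by rw [Set.ncard_singleton]; exact (hP.mdeg_eq_two hv hw hvw).2.le) (Set.toFinite _)
  have hx' : x ∈ ({u} : Set V) := heq ▸ hx
  simpa using hx'

end MissingPaths2

section Loses

variable {p q x y : V}

lemma Loses.symm_right (h : Loses A p q x y) : Loses A p q y x := h.symm

lemma Loses.symm_left (h : Loses A p q x y) : Loses A q p x y := by
  rcases h with ⟨h₁, h₂, h₃, h₄, h₅, h₆⟩ | ⟨h₁, h₂, h₃, h₄, h₅, h₆⟩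
  exacts [Or.inr ⟨h₂, h₁, h₅, h₆, h₃, h₄⟩, Or.inl ⟨h₂, h₁, h₅, h₆, h₃, h₄⟩]

lemma Loses.not_secondOut (h : Loses A p q x y) {u v : V} (hu : u ∈ ({p, q} : Set V))
    (hv : v ∈ ({x, y} : Set V)) : ¬ SecondOut A u v := by
  rcases hu with rfl | rfl <;> rcases hv with rfl | rfl <;>
    rcases h with ⟨h₁, h₂, -, h₄, -, h₆⟩ | ⟨h₁, h₂, -, h₄, -, h₆⟩ <;>
    first | assumption | exact not_secondOut_of_arc ‹_›

lemma Loses.arc_pattern (h : Loses A p q x y) :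
    (A p x ↔ A q y) ∧ (A p y ↔ ¬ A q y) ∧ (A q x ↔ ¬ A q y) := by
  rcases h with ⟨h₁, h₂, h₃, -, h₅, -⟩ | ⟨h₁, h₂, h₃, -, h₅, -⟩ <;> tauto

end Loses

section Layers

variable {k : ℕ}

def layer (a b c : ZMod k → V) (i : ZMod k) : Set V := {a i, b i, c i}

variable {a b c : ZMod k → V} {i : ZMod k} {e x v : V}

@[simp]
lemma mem_layer : x ∈ layer a b c i ↔ x = a i ∨ x = b i ∨ x = c i := Iff.rfl

lemma mem_layer_of_end (he : e = a i ∨ e = c i) : e ∈ layer a b c i := by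
  rcases he with rfl | rfl <;> simp

lemma exists_end_of_mem_layer (hx : x ∈ layer a b c i) :
    ∃ e, (e = a i ∨ e = c i) ∧ (x = e ∨ x = b i) := by
  rcases hx with rfl | rfl | rfl
  exacts [⟨_, Or.inl rfl, Or.inl rfl⟩, ⟨_, Or.inl rfl, Or.inr rfl⟩, ⟨_, Or.inr rfl, Or.inl rfl⟩]

lemma mem_Kset : x ∈ Kset a b c ↔ ∃ i, x ∈ layer a b c i := Iff.rfl

lemma layer_subset_Kset (a b c : ZMod k → V) (i : ZMod k) : layer a b c i ⊆ Kset a b c :=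
  fun _ hx => ⟨i, hx⟩

lemma mem_inIn_Kset (hx : x ∈ layer a b c i) : x ∈ inIn A (Kset a b c) v ↔ A x v :=
  ⟨And.right, And.intro (layer_subset_Kset a b c i hx)⟩

end Layers

/-- The layers `{aᵢ, bᵢ, cᵢ}` of a double cycle with the arcs that the losing conditions force
between them (see `IsDoubleCycle.isLayeredCycle`). -/
structure IsLayeredCycle (A : V → V → Prop) (k : ℕ) (a b c : ZMod k → V) : Prop where
  oriented : Oriented A
  two_le : 2 ≤ k
  isMissing_a_b : ∀ i, IsMissing A (a i) (b i)
  isMissing_b_c : ∀ i, IsMissing A (b i) (c i)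
  a_ne_c : ∀ i, a i ≠ c i
  adj_a_c : ∀ i, A (a i) (c i) ∨ A (c i) (a i)
  ne_of_mem_layer : ∀ {i j x y}, i ≠ j → x ∈ layer a b c i → y ∈ layer a b c j → x ≠ y
  adj_of_mem_layer : ∀ {i j x y}, i ≠ j → x ∈ layer a b c i → y ∈ layer a b c j →
    A x y ∨ A y x
  /-- No vertex of layer `i + 1` is in `N⁺⁺(x)` for `x` in layer `i`. -/
  arc_of_arc_arc : ∀ {i x y w}, x ∈ layer a b c i → y ∈ layer a b c (i + 1) →
    A x w → A w y → A x y
  /-- Between consecutive layers, an arc joining two ends or two middles points the same way as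
  `b i → b (i + 1)`, and one joining an end and a middle points the other way. -/
  arc_iff : ∀ {i x y}, x ∈ layer a b c i → y ∈ layer a b c (i + 1) →
    (A x y ↔ (A (b i) (b (i + 1)) ↔ (x = b i ↔ y = b (i + 1))))

namespace IsDoubleCycle

variable {k : ℕ} {a b c : ZMod k → V} {i j : ZMod k} {e x y : V}

lemma ne_of_mem_layer (hC : IsDoubleCycle A k a b c) (hij : i ≠ j) (hx : x ∈ layer a b c i)
    (hy : y ∈ layer a b c j) : x ≠ y :=
  fun heq => Set.disjoint_left.mp (hC.2.2.1 i j hij) hx (heq ▸ hy)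

lemma ne_b_of_end (hC : IsDoubleCycle A k a b c) (he : e = a i ∨ e = c i) : e ≠ b i := by
  rcases he with rfl | rfl
  exacts [(hC.2.1 i).1.1, (hC.2.1 i).2.1.1.symm]

lemma mem_layer_of_isMissing [Finite V] (hP : MissingPaths2 A) (hC : IsDoubleCycle A k a b c)
    (hx : x ∈ layer a b c i) (hxy : IsMissing A x y) : y ∈ layer a b c i := by
  obtain ⟨hab, hbc, hac⟩ := hC.2.1 i
  rcases hx with rfl | rfl | rfl
  · simp [hP.eq_of_isMissing hab.symm hbc hac hxy]
  · rcases hP.eq_or_eq_of_isMissing hab.symm hbc hac hxy with rfl | rfl <;> simp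
  · simp [hP.eq_of_isMissing hbc hab.symm hac.symm hxy]

lemma adj_of_mem_layer [Finite V] (hP : MissingPaths2 A) (hC : IsDoubleCycle A k a b c)
    (hij : i ≠ j) (hx : x ∈ layer a b c i) (hy : y ∈ layer a b c j) : A x y ∨ A y x := by
  by_contra! h
  have hxy : IsMissing A x y := ⟨hC.ne_of_mem_layer hij hx hy, h.1, h.2⟩
  exact hC.ne_of_mem_layer hij (hC.mem_layer_of_isMissing hP hx hxy) hy rfl

lemma adj_a_c [Finite V] (hP : MissingPaths2 A) (hC : IsDoubleCycle A k a b c) (i : ZMod k) :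
    A (a i) (c i) ∨ A (c i) (a i) := by
  by_contra! h
  obtain ⟨hab, hbc, hac⟩ := hC.2.1 i
  exact hbc.1 (hP.eq_of_isMissing hab.symm hbc hac ⟨hac, h.1, h.2⟩).symm

lemma loses_of_ends (hC : IsDoubleCycle A k a b c) {e' : V} (he : e = a i ∨ e = c i)
    (he' : e' = a (i + 1) ∨ e' = c (i + 1)) : Loses A e (b i) e' (b (i + 1)) := by
  obtain ⟨L₁, L₂, L₃, L₄⟩ := hC.2.2.2 i
  rcases he with rfl | rfl <;> rcases he' with rfl | rfl
  exacts [L₁, L₂.symm_right, L₃.symm_left, L₄.symm_left.symm_right]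

lemma not_secondOut (hC : IsDoubleCycle A k a b c) (hx : x ∈ layer a b c i)
    (hy : y ∈ layer a b c (i + 1)) : ¬ SecondOut A x y := by
  obtain ⟨e, he, hxe⟩ := exists_end_of_mem_layer hx
  obtain ⟨e', he', hye'⟩ := exists_end_of_mem_layer hy
  exact (hC.loses_of_ends he he').not_secondOut hxe hye'

lemma arc_iff (hC : IsDoubleCycle A k a b c) (hx : x ∈ layer a b c i)
    (hy : y ∈ layer a b c (i + 1)) :
    A x y ↔ (A (b i) (b (i + 1)) ↔ (x = b i ↔ y = b (i + 1))) := by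
  obtain ⟨e, he, hxe⟩ := exists_end_of_mem_layer hx
  obtain ⟨e', he', hye'⟩ := exists_end_of_mem_layer hy
  obtain ⟨hee', heb', hbe'⟩ := (hC.loses_of_ends he he').arc_pattern
  have hne := hC.ne_b_of_end he
  have hne' := hC.ne_b_of_end he'
  rcases hxe with rfl | rfl <;> rcases hye' with rfl | rfl <;>
    simp only [iff_true, iff_false, not_true_eq_false, hee', heb', hbe', hne, hne']

lemma isLayeredCycle [Finite V] (hA : Oriented A) (hP : MissingPaths2 A)
    (hC : IsDoubleCycle A k a b c) : IsLayeredCycle A k a b c where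
  oriented := hA
  two_le := hC.1
  isMissing_a_b i := (hC.2.1 i).1
  isMissing_b_c i := (hC.2.1 i).2.1
  a_ne_c i := (hC.2.1 i).2.2
  adj_a_c := hC.adj_a_c hP
  ne_of_mem_layer := hC.ne_of_mem_layer
  adj_of_mem_layer := hC.adj_of_mem_layer hP
  arc_of_arc_arc {i x y w} hx hy hxw hwy := by
    by_contra hxy
    exact hC.not_secondOut hx hy
      ⟨(hC.ne_of_mem_layer (ZMod.self_ne_add_one hC.1 i) hx hy).symm, hxy, w, hxw, hwy⟩
  arc_iff := hC.arc_iff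

end IsDoubleCycle

namespace IsLayeredCycle

variable {k : ℕ} {a b c : ZMod k → V} {i j m t : ZMod k} {e e' u v x y : V}

lemma ne_add_one (H : IsLayeredCycle A k a b c) (i : ZMod k) : i ≠ i + 1 :=
  ZMod.self_ne_add_one H.two_le i

lemma ne_b_of_end (H : IsLayeredCycle A k a b c) (he : e = a i ∨ e = c i) : e ≠ b i := by
  rcases he with rfl | rfl
  exacts [(H.isMissing_a_b i).1, (H.isMissing_b_c i).1.symm]

lemma eq_b_of_isMissing (H : IsLayeredCycle A k a b c) (he : e = a i ∨ e = c i)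
    (hx : x ∈ layer a b c i) (hex : IsMissing A e x) : x = b i := by
  rcases he with rfl | rfl <;> rcases hx with rfl | rfl | rfl
  · exact absurd rfl hex.1
  · rfl
  · exact ((H.adj_a_c i).elim hex.2.1 hex.2.2).elim
  · exact ((H.adj_a_c i).elim hex.2.2 hex.2.1).elim
  · rfl
  · exact absurd rfl hex.1

lemma arc_comm_iff (H : IsLayeredCycle A k a b c) (hij : i ≠ j) (hx : x ∈ layer a b c i)
    (hy : y ∈ layer a b c j) : A y x ↔ ¬ A x y :=
  ⟨H.oriented y x, (H.adj_of_mem_layer hij hx hy).resolve_left⟩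

lemma arc_b_iff (H : IsLayeredCycle A k a b c) (he : e = a i ∨ e = c i)
    (hy : y ∈ layer a b c (i + 1)) : A (b i) y ↔ A y e := by
  have hbe := H.ne_b_of_end he
  rw [H.arc_comm_iff (H.ne_add_one i) (mem_layer_of_end he) hy, H.arc_iff (by simp) hy,
    H.arc_iff (mem_layer_of_end he) hy]
  simp only [true_iff, hbe, false_iff]
  tauto

lemma arc_end_iff (H : IsLayeredCycle A k a b c) (he : e = a i ∨ e = c i)
    (hy : y ∈ layer a b c (i + 1)) : A e y ↔ A y (b i) := by
  rw [H.arc_comm_iff (H.ne_add_one i) (by simp) hy, H.arc_b_iff he hy,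
    H.arc_comm_iff (H.ne_add_one i) (mem_layer_of_end he) hy, not_not]

lemma arc_iff_arc_b_succ (H : IsLayeredCycle A k a b c) (hx : x ∈ layer a b c i)
    (he : e = a (i + 1) ∨ e = c (i + 1)) : A (b (i + 1)) x ↔ A x e := by
  have hbe := H.ne_b_of_end he
  rw [H.arc_comm_iff (H.ne_add_one i) hx (by simp), H.arc_iff hx (by simp),
    H.arc_iff hx (mem_layer_of_end he)]
  simp only [iff_true, hbe, iff_false]
  tauto

lemma exists_arc_succ (H : IsLayeredCycle A k a b c) (hv : v ∈ layer a b c t) :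
    ∃ y ∈ layer a b c (t + 1), A v y := by
  by_cases h : A v (b (t + 1))
  · exact ⟨_, by simp, h⟩
  · refine ⟨a (t + 1), by simp, (H.arc_iff_arc_b_succ hv (Or.inl rfl)).1 ?_⟩
    exact (H.arc_comm_iff (H.ne_add_one t) hv (by simp)).2 h

lemma arc_of_arc_of_arc (H : IsLayeredCycle A k a b c) (hu : u ∈ layer a b c j) (hjm : j ≠ m)
    (hx : x ∈ layer a b c m) (hy : y ∈ layer a b c (m + 1)) (huy : A u y) (hyx : A y x) :
    A u x :=
  (H.adj_of_mem_layer hjm hu hx).resolve_right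
    fun hxu => H.oriented y x hyx (H.arc_of_arc_arc hx hy hxu huy)

lemma arc_of_arc_b_succ_of_arc_end_succ (H : IsLayeredCycle A k a b c)
    (hu : u ∈ layer a b c j) (hjm : j ≠ m) (hb : A u (b (m + 1)))
    (he : e = a (m + 1) ∨ e = c (m + 1)) (hue : A u e) (hx : x ∈ layer a b c m) : A u x := by
  by_cases hbx : A (b (m + 1)) x
  · exact H.arc_of_arc_of_arc hu hjm hx (by simp) hb hbx
  · have hex : A e x := (H.arc_comm_iff (H.ne_add_one m) hx (mem_layer_of_end he)).2
      (mt (H.arc_iff_arc_b_succ hx he).2 hbx)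
    exact H.arc_of_arc_of_arc hu hjm hx (mem_layer_of_end he) hue hex

lemma exists_two_path (H : IsLayeredCycle A k a b c) (hu : u ∈ layer a b c j)
    (hv : v ∈ layer a b c t) (hjt : j ≠ t) (hjt' : j ≠ t + 1) (huv : A u v) :
    ∃ w ∈ layer a b c (t + 1), A v w ∧ A w u := by
  by_contra! hno
  have hbeat : ∀ w ∈ layer a b c (t + 1), A v w → A u w := fun w hw hvw =>
    (H.adj_of_mem_layer hjt' hu hw).resolve_right (hno w hw hvw)
  -- `u` beats the middle and an end of layer `m`: true for `m = t`, inherited from `m + 1` by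
  -- `m ≠ j`, and false for `m = j + 1`.
  let D : ZMod k → Prop := fun m => A u (b m) ∧ ∃ e, (e = a m ∨ e = c m) ∧ A u e
  have hstep : ∀ m, m ≠ j → D (m + 1) → D m := by
    rintro m hm ⟨hb, e, he, hue⟩
    exact ⟨H.arc_of_arc_b_succ_of_arc_end_succ hu hm.symm hb he hue (by simp), a m, Or.inl rfl,
      H.arc_of_arc_b_succ_of_arc_end_succ hu hm.symm hb he hue (by simp)⟩
  have hbase : D t := by
    obtain ⟨y, hy, hvy⟩ := H.exists_arc_succ hv
    obtain ⟨e, he, rfl | rfl⟩ := exists_end_of_mem_layer hv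
    · exact ⟨H.arc_of_arc_of_arc hu hjt (by simp) hy (hbeat y hy hvy)
        ((H.arc_end_iff he hy).1 hvy), v, he, huv⟩
    · exact ⟨huv, a t, Or.inl rfl, H.arc_of_arc_of_arc hu hjt (by simp) hy (hbeat y hy hvy)
        ((H.arc_b_iff (Or.inl rfl) hy).1 hvy)⟩
  have : NeZero k := ⟨by have := H.two_le; omega⟩
  obtain ⟨hb, e, he, hue⟩ := ZMod.succ_of_descent hstep hbase
  exact H.oriented _ _ hb ((H.arc_iff_arc_b_succ hu he).2 hue)

lemma exists_two_path_of_isMissing (H : IsLayeredCycle A k a b c) (hv : v ∈ layer a b c t)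
    (hx : x ∈ layer a b c t) (hvx : IsMissing A v x) :
    ∃ w ∈ layer a b c (t + 1), A v w ∧ A w x := by
  obtain ⟨y, hy, hvy⟩ := H.exists_arc_succ hv
  obtain ⟨e, he, rfl | rfl⟩ := exists_end_of_mem_layer hv
  · obtain rfl := H.eq_b_of_isMissing he hx hvx
    exact ⟨y, hy, hvy, (H.arc_end_iff he hy).1 hvy⟩
  · obtain ⟨e', he', rfl | rfl⟩ := exists_end_of_mem_layer hx
    · exact ⟨y, hy, hvy, (H.arc_b_iff he' hy).1 hvy⟩
    · exact absurd rfl hvx.1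

lemma secondOutIn_eq (H : IsLayeredCycle A k a b c) (hv : v ∈ layer a b c t)
    (hin : ∀ x ∈ layer a b c t, ¬ A x v) :
    secondOutIn A (Kset a b c) v =
      (inIn A (Kset a b c) v \ layer a b c (t + 1)) ∪ {x ∈ layer a b c t | IsMissing A v x} := by
  ext x
  simp only [secondOutIn, inIn, Set.mem_union, Set.mem_sdiff, Set.mem_ofPred_eq]
  constructor
  · rintro ⟨hxK, hxv, hvx, w, -, hvw, hwx⟩
    obtain ⟨i, hxi⟩ := mem_Kset.1 hxK
    by_cases hit : i = t
    · subst hit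
      exact Or.inr ⟨hxi, hxv.symm, hvx, hin x hxi⟩
    · exact Or.inl ⟨⟨hxK, (H.arc_comm_iff (Ne.symm hit) hv hxi).2 hvx⟩,
        fun hx => hvx (H.arc_of_arc_arc hv hx hvw hwx)⟩
  · rintro (⟨⟨hxK, hxv⟩, hx⟩ | ⟨hx, hvx⟩)
    · obtain ⟨j, hxj⟩ := mem_Kset.1 hxK
      have hjt : j ≠ t := by rintro rfl; exact hin x hxj hxv
      have hjt' : j ≠ t + 1 := by rintro rfl; exact hx hxj
      obtain ⟨w, hw, hvw, hwx⟩ := H.exists_two_path hxj hv hjt hjt' hxv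
      exact ⟨hxK, fun h => H.oriented.irrefl x (h ▸ hxv), H.oriented _ _ hxv, w,
        layer_subset_Kset a b c _ hw, hvw, hwx⟩
    · obtain ⟨w, hw, hvw, hwx⟩ := H.exists_two_path_of_isMissing hv hx hvx
      exact ⟨layer_subset_Kset a b c _ hx, hvx.1.symm, hvx.2.1, w,
        layer_subset_Kset a b c _ hw, hvw, hwx⟩

lemma arc_to_iff (H : IsLayeredCycle A k a b c) (hv : v ∈ layer a b c t)
    (hy : y ∈ layer a b c (t + 1)) : A y v ↔ (A (b (t + 1)) v ↔ y = b (t + 1)) := by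
  obtain ⟨e, he, rfl | rfl⟩ := exists_end_of_mem_layer hy
  · rw [H.arc_iff_arc_b_succ hv he, H.arc_comm_iff (H.ne_add_one t) hv hy,
      iff_false_right (H.ne_b_of_end he)]
  · simp

lemma inIn_inter_layer_succ (H : IsLayeredCycle A k a b c) (hv : v ∈ layer a b c t) :
    inIn A (Kset a b c) v ∩ layer a b c (t + 1) =
      {y ∈ layer a b c (t + 1) | A (b (t + 1)) v ↔ y = b (t + 1)} := by
  ext y
  exact ⟨fun ⟨⟨_, hyv⟩, hy⟩ => ⟨hy, (H.arc_to_iff hv hy).1 hyv⟩,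
    fun ⟨hy, h⟩ => ⟨⟨layer_subset_Kset a b c _ hy, (H.arc_to_iff hv hy).2 h⟩, hy⟩⟩

lemma ncard_inIn_inter_layer_succ_of_arc (H : IsLayeredCycle A k a b c)
    (hv : v ∈ layer a b c t) (h : A (b (t + 1)) v) :
    (inIn A (Kset a b c) v ∩ layer a b c (t + 1)).ncard = 1 := by
  rw [H.inIn_inter_layer_succ hv, Set.ncard_eq_one]
  exact ⟨b (t + 1), by ext; aesop⟩

lemma ncard_inIn_inter_layer_succ_of_not_arc (H : IsLayeredCycle A k a b c)
    (hv : v ∈ layer a b c t) (h : ¬ A (b (t + 1)) v) :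
    (inIn A (Kset a b c) v ∩ layer a b c (t + 1)).ncard = 2 := by
  have ha := H.ne_b_of_end (i := t + 1) (Or.inl rfl)
  have hc := H.ne_b_of_end (i := t + 1) (Or.inr rfl)
  rw [H.inIn_inter_layer_succ hv, ← Set.ncard_pair (H.a_ne_c (t + 1))]
  congr 1
  ext y
  aesop

lemma ncard_isMissing_b (H : IsLayeredCycle A k a b c) :
    {x ∈ layer a b c t | IsMissing A (b t) x}.ncard = 2 := by
  rw [← Set.ncard_pair (H.a_ne_c t)]
  congr 1
  ext x
  simp only [mem_layer, Set.mem_ofPred_eq, Set.mem_insert_iff, Set.mem_singleton_iff]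
  constructor
  · rintro ⟨rfl | rfl | rfl, hx⟩
    exacts [Or.inl rfl, absurd rfl hx.1, Or.inr rfl]
  · rintro (rfl | rfl)
    exacts [⟨Or.inl rfl, (H.isMissing_a_b t).symm⟩, ⟨Or.inr (Or.inr rfl), H.isMissing_b_c t⟩]

lemma ncard_isMissing_end (H : IsLayeredCycle A k a b c) (he : e = a t ∨ e = c t) :
    {x ∈ layer a b c t | IsMissing A e x}.ncard = 1 := by
  refine Set.ncard_eq_one.2 ⟨b t, Set.ext fun x => ⟨fun ⟨hx, hex⟩ => H.eq_b_of_isMissing he hx hex,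
    ?_⟩⟩
  rintro rfl
  rcases he with rfl | rfl
  exacts [⟨by simp, H.isMissing_a_b t⟩, ⟨by simp, (H.isMissing_b_c t).symm⟩]

variable [Finite V]

lemma ncard_secondOutIn_add (H : IsLayeredCycle A k a b c) (hv : v ∈ layer a b c t)
    (hin : ∀ x ∈ layer a b c t, ¬ A x v) :
    (secondOutIn A (Kset a b c) v).ncard + (inIn A (Kset a b c) v ∩ layer a b c (t + 1)).ncard =
      (inIn A (Kset a b c) v).ncard + {x ∈ layer a b c t | IsMissing A v x}.ncard := by
  have hdisj : Disjoint (inIn A (Kset a b c) v \ layer a b c (t + 1))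
      {x ∈ layer a b c t | IsMissing A v x} :=
    Set.disjoint_left.2 fun x hx hx' => hx'.2.2.2 hx.1.2
  have hsplit := Set.ncard_inter_add_ncard_sdiff_eq_ncard (inIn A (Kset a b c) v)
    (layer a b c (t + 1))
  rw [H.secondOutIn_eq hv hin, Set.ncard_union_eq hdisj]
  omega

lemma ncard_secondOutIn_b (H : IsLayeredCycle A k a b c) (t : ZMod k) :
    (b (t + 1) ∈ inIn A (Kset a b c) (b t) →
        (secondOutIn A (Kset a b c) (b t)).ncard = (inIn A (Kset a b c) (b t)).ncard + 1) ∧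
    (b (t + 1) ∉ inIn A (Kset a b c) (b t) →
        (secondOutIn A (Kset a b c) (b t)).ncard = (inIn A (Kset a b c) (b t)).ncard) := by
  have hin : ∀ x ∈ layer a b c t, ¬ A x (b t) := by
    rintro x (rfl | rfl | rfl)
    exacts [(H.isMissing_a_b t).2.1, H.oriented.irrefl _, (H.isMissing_b_c t).2.2]
  have hcount := H.ncard_secondOutIn_add (by simp) hin
  rw [H.ncard_isMissing_b] at hcount
  rw [mem_inIn_Kset (i := t + 1) (by simp)]
  refine ⟨fun h => ?_, fun h => ?_⟩
  · rw [H.ncard_inIn_inter_layer_succ_of_arc (by simp) h] at hcount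
    omega
  · rw [H.ncard_inIn_inter_layer_succ_of_not_arc (by simp) h] at hcount
    omega

lemma ncard_secondOutIn_end (H : IsLayeredCycle A k a b c)
    (hee' : (e = a t ∧ e' = c t) ∨ (e = c t ∧ e' = a t)) (he' : e' ∉ inIn A (Kset a b c) e) :
    (b (t + 1) ∈ inIn A (Kset a b c) e →
        (secondOutIn A (Kset a b c) e).ncard = (inIn A (Kset a b c) e).ncard) ∧
    (b (t + 1) ∉ inIn A (Kset a b c) e →
        (secondOutIn A (Kset a b c) e).ncard = (inIn A (Kset a b c) e).ncard - 1) := by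
  have hin : ∀ x ∈ layer a b c t, ¬ A x e := by
    rcases hee' with ⟨rfl, rfl⟩ | ⟨rfl, rfl⟩ <;> rw [mem_inIn_Kset (i := t) (by simp)] at he' <;>
      rintro x (rfl | rfl | rfl)
    exacts [H.oriented.irrefl _, (H.isMissing_a_b t).2.2, he', he', (H.isMissing_b_c t).2.1,
      H.oriented.irrefl _]
  have he : e = a t ∨ e = c t := hee'.imp And.left And.left
  have hcount := H.ncard_secondOutIn_add (mem_layer_of_end he) hin
  rw [H.ncard_isMissing_end he] at hcount
  rw [mem_inIn_Kset (i := t + 1) (by simp)]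
  refine ⟨fun h => ?_, fun h => ?_⟩
  · rw [H.ncard_inIn_inter_layer_succ_of_arc (mem_layer_of_end he) h] at hcount
    omega
  · rw [H.ncard_inIn_inter_layer_succ_of_not_arc (mem_layer_of_end he) h] at hcount
    omega

end IsLayeredCycle

/-- Lemma 4.12: sizes of the second out-neighborhoods in `D[K(C)]`. -/
theorem stmt11 {V : Type*} [Fintype V] (A : V → V → Prop) (hA : Oriented A)
    (hP : MissingPaths2 A) (k : ℕ) (a b c : ZMod k → V)
    (hC : IsDoubleCycle A k a b c) (K : Set V) (hK : K = Kset a b c) :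
    ∀ t,
      (c t ∉ inIn A K (a t) →
        ((b (t + 1) ∈ inIn A K (a t) →
            (secondOutIn A K (a t)).ncard = (inIn A K (a t)).ncard) ∧
         (b (t + 1) ∉ inIn A K (a t) →
            (secondOutIn A K (a t)).ncard = (inIn A K (a t)).ncard - 1))) ∧
      (a t ∉ inIn A K (c t) →
        ((b (t + 1) ∈ inIn A K (c t) →
            (secondOutIn A K (c t)).ncard = (inIn A K (c t)).ncard) ∧
         (b (t + 1) ∉ inIn A K (c t) →
            (secondOutIn A K (c t)).ncard = (inIn A K (c t)).ncard - 1))) ∧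
      ((b (t + 1) ∈ inIn A K (b t) →
          (secondOutIn A K (b t)).ncard = (inIn A K (b t)).ncard + 1) ∧
       (b (t + 1) ∉ inIn A K (b t) →
          (secondOutIn A K (b t)).ncard = (inIn A K (b t)).ncard)) := by
  subst hK
  have H := hC.isLayeredCycle hA hP
  exact fun t => ⟨H.ncard_secondOutIn_end (Or.inl ⟨rfl, rfl⟩),
    H.ncard_secondOutIn_end (Or.inr ⟨rfl, rfl⟩), H.ncard_secondOutIn_b t⟩

end SSNC
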